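/- arXiv:1201.6551 — 4 statements merged into one kernel-verified Lean document; each statement's English description precedes it below -/
import Mathlib

section
/- Let $p$ and $q$ be probability densities on a $\sigma$-finite measured space $(T,\mathcal{T},m)$, and let $(P_t)_{t\in T}$, $(Q_t)_{t\in T}$ be families of probability densities on a $\sigma$-finite measured space $(E,\mathcal{A},\nu)$, measurable in $t$. Define the mixtures $P=\int_T P_t\, p(t)\,dm(t)$ and $Q=\int_T Q_t\, q(t)\,dm(t)$. Then $h^2(P,Q) \le 2 h^2(p,q) + 2\int_T h^2(P_t,Q_t)\, q(t)\, dm(t)$. -/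
/-! Insert the intermediate mixture `R = ∫ P_t q(t) dm(t)`: since `(a + b)² ≤ 2a² + 2b²`,
`h²(P, Q) ≤ 2 h²(P, R) + 2 h²(R, Q)`. Both terms are controlled by the joint convexity
`h²(∫ A_t dm, ∫ B_t dm) ≤ ∫ h²(A_t, B_t) dm` for nonnegative kernels, which holds pointwise in `x`
by Cauchy–Schwarz, `(√∫a - √∫b)² ≤ ∫ (√a - √b)²`, and then integrates by Fubini.
Taking `A_t = P_t p(t)`, `B_t = P_t q(t)` gives `h²(p, q)`; taking `A_t = P_t q(t)`,
`B_t = Q_t q(t)` gives `∫ h²(P_t, Q_t) q(t) dm(t)`. -/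

open MeasureTheory

/-- Squared Hellinger distance between two densities on a measured space. -/
noncomputable def hell2 {E : Type*} [MeasurableSpace E] (ν : Measure E) (f g : E → ℝ) : ℝ :=
  (1 / 2) * ∫ x, (Real.sqrt (f x) - Real.sqrt (g x)) ^ 2 ∂ν

section SqrtIntegral

variable {α : Type*} [MeasurableSpace α] {μ : Measure α} {f g : α → ℝ}

lemma MeasureTheory.Integrable.memLp_two_sqrt (hf : Integrable f μ) :
    MemLp (fun x => √(f x)) 2 μ :=
  (memLp_two_iff_integrable_sq (Real.continuous_sqrt.comp_aestronglyMeasurable hf.1)).2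
    (by simpa only [Real.sq_sqrt'] using hf.pos_part)

lemma integrable_sq_sqrt_sub (hf : Integrable f μ) (hg : Integrable g μ) :
    Integrable (fun x => (√(f x) - √(g x)) ^ 2) μ :=
  (hf.memLp_two_sqrt.sub hg.memLp_two_sqrt).integrable_sq

lemma integral_sqrt_mul_sqrt_le (hf : Integrable f μ) (hg : Integrable g μ)
    (hf0 : 0 ≤ᵐ[μ] f) (hg0 : 0 ≤ᵐ[μ] g) :
    ∫ x, √(f x) * √(g x) ∂μ ≤ √(∫ x, f x ∂μ) * √(∫ x, g x ∂μ) := by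
  have integral_sqrt_rpow_two {u : α → ℝ} (hu0 : 0 ≤ᵐ[μ] u) :
      ∫ x, √(u x) ^ (2 : ℝ) ∂μ = ∫ x, u x ∂μ :=
    integral_congr_ae (by filter_upwards [hu0] with x hx; rw [Real.rpow_two, Real.sq_sqrt hx])
  have holder := integral_mul_le_Lp_mul_Lq_of_nonneg Real.HolderConjugate.two_two
    (ae_of_all _ fun x => Real.sqrt_nonneg (f x)) (ae_of_all _ fun x => Real.sqrt_nonneg (g x))
    (by simpa using hf.memLp_two_sqrt) (by simpa using hg.memLp_two_sqrt)
  rwa [integral_sqrt_rpow_two hf0, integral_sqrt_rpow_two hg0, ← Real.sqrt_eq_rpow,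
    ← Real.sqrt_eq_rpow] at holder

lemma sq_sqrt_integral_sub_sqrt_integral_le (hf : Integrable f μ) (hg : Integrable g μ)
    (hf0 : 0 ≤ᵐ[μ] f) (hg0 : 0 ≤ᵐ[μ] g) :
    (√(∫ x, f x ∂μ) - √(∫ x, g x ∂μ)) ^ 2 ≤ ∫ x, (√(f x) - √(g x)) ^ 2 ∂μ := by
  have expand : ∫ x, (√(f x) - √(g x)) ^ 2 ∂μ =
      ∫ x, f x ∂μ + ∫ x, g x ∂μ - 2 * ∫ x, √(f x) * √(g x) ∂μ := by
    have hsum : Integrable (fun x => f x + g x) μ := hf.add hg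
    have hprod : Integrable (fun x => 2 * (√(f x) * √(g x))) μ :=
      (hf.memLp_two_sqrt.integrable_mul hg.memLp_two_sqrt).const_mul 2
    rw [← integral_add hf hg, ← integral_const_mul, ← integral_sub hsum hprod]
    refine integral_congr_ae ?_
    filter_upwards [hf0, hg0] with x hfx hgx
    rw [sub_sq, Real.sq_sqrt hfx, Real.sq_sqrt hgx]
    ring
  rw [expand, sub_sq, Real.sq_sqrt (integral_nonneg_of_ae hf0),
    Real.sq_sqrt (integral_nonneg_of_ae hg0)]
  linarith [integral_sqrt_mul_sqrt_le hf hg hf0 hg0]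

end SqrtIntegral

section Hellinger

variable {E : Type*} [MeasurableSpace E] {ν : Measure E}

lemma hell2_le_two_mul_add {f g h : E → ℝ} (hf : Integrable f ν) (hg : Integrable g ν)
    (hh : Integrable h ν) : hell2 ν f h ≤ 2 * hell2 ν f g + 2 * hell2 ν g h := by
  have hfg := (integrable_sq_sqrt_sub hf hg).const_mul 2
  have hgh := (integrable_sq_sqrt_sub hg hh).const_mul 2
  have key : ∫ x, (√(f x) - √(h x)) ^ 2 ∂ν ≤
      ∫ x, 2 * (√(f x) - √(g x)) ^ 2 + 2 * (√(g x) - √(h x)) ^ 2 ∂ν :=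
    integral_mono_of_nonneg (ae_of_all _ fun x => sq_nonneg _) (hfg.add hgh)
      (ae_of_all _ fun x => by nlinarith [sq_nonneg (√(f x) - 2 * √(g x) + √(h x))])
  rw [integral_add hfg hgh, integral_const_mul, integral_const_mul] at key
  simp only [hell2]
  linarith

lemma hell2_mul_const {f g : E → ℝ} {c : ℝ} (hc : 0 ≤ c) :
    hell2 ν (fun x => f x * c) (fun x => g x * c) = hell2 ν f g * c := by
  simp only [hell2, Real.sqrt_mul' _ hc, ← sub_mul, mul_pow, Real.sq_sqrt hc, integral_mul_const]
  ring

lemma hell2_mul_const_mul_const {K : E → ℝ} (hK : ∀ x, 0 ≤ K x) (a b : ℝ) :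
    hell2 ν (fun x => K x * a) (fun x => K x * b) = (√a - √b) ^ 2 / 2 * ∫ x, K x ∂ν := by
  simp only [hell2, Real.sqrt_mul (hK _), ← mul_sub, mul_pow, Real.sq_sqrt (hK _),
    integral_mul_const]
  ring

end Hellinger

section Mixture

variable {T E : Type*} [MeasurableSpace T] [MeasurableSpace E] {m : Measure T} {ν : Measure E}

lemma integrable_uncurry_mul_of_integral_eq_one [SFinite ν] {K : T → E → ℝ} {w : T → ℝ}
    (hK : Measurable (Function.uncurry K)) (hK0 : ∀ t x, 0 ≤ K t x)
    (hK1 : ∀ t, ∫ x, K t x ∂ν = 1) (hw : Integrable w m) :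
    Integrable (Function.uncurry fun t x => K t x * w t) (m.prod ν) := by
  have hmeas : AEStronglyMeasurable (Function.uncurry fun t x => K t x * w t) (m.prod ν) :=
    hK.aestronglyMeasurable.mul hw.1.comp_fst
  refine (integrable_prod_iff hmeas).2
    ⟨ae_of_all _ fun t => ?_, hw.norm.congr (ae_of_all _ fun t => ?_)⟩
  · exact (Integrable.of_integral_ne_zero (by simp [hK1 t])).mul_const (w t)
  · simp [norm_mul, Real.norm_of_nonneg (hK0 t _), integral_mul_const, hK1 t]

lemma hell2_integral_le_integral_hell2 [SFinite m] [SFinite ν] {A B : T → E → ℝ}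
    (hA : Integrable (Function.uncurry A) (m.prod ν))
    (hB : Integrable (Function.uncurry B) (m.prod ν))
    (hA0 : ∀ t x, 0 ≤ A t x) (hB0 : ∀ t x, 0 ≤ B t x) :
    hell2 ν (fun x => ∫ t, A t x ∂m) (fun x => ∫ t, B t x ∂m) ≤
      ∫ t, hell2 ν (A t) (B t) ∂m := by
  have hAB : Integrable (Function.uncurry fun t x => (√(A t x) - √(B t x)) ^ 2) (m.prod ν) :=
    integrable_sq_sqrt_sub hA hB
  have pointwise : ∀ᵐ x ∂ν, (√(∫ t, A t x ∂m) - √(∫ t, B t x ∂m)) ^ 2 ≤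
      ∫ t, (√(A t x) - √(B t x)) ^ 2 ∂m := by
    filter_upwards [hA.prod_left_ae, hB.prod_left_ae] with x hAx hBx
    exact sq_sqrt_integral_sub_sqrt_integral_le hAx hBx (ae_of_all _ fun t => hA0 t x)
      (ae_of_all _ fun t => hB0 t x)
  calc hell2 ν (fun x => ∫ t, A t x ∂m) (fun x => ∫ t, B t x ∂m)
      ≤ 1 / 2 * ∫ x, ∫ t, (√(A t x) - √(B t x)) ^ 2 ∂m ∂ν := by
        unfold hell2
        exact mul_le_mul_of_nonneg_left (integral_mono_of_nonneg
          (ae_of_all _ fun x => sq_nonneg _) hAB.integral_prod_right pointwise) (by norm_num)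
    _ = ∫ t, hell2 ν (A t) (B t) ∂m := by
        rw [← integral_integral_swap hAB, ← integral_const_mul]
        rfl

end Mixture

theorem hellinger_mixture_general {T E : Type*} [MeasurableSpace T] [MeasurableSpace E]
    (m : Measure T) (ν : Measure E) [SigmaFinite m] [SigmaFinite ν]
    (p q : T → ℝ) (P Q : T → E → ℝ)
    (hp0 : ∀ t, 0 ≤ p t) (hq0 : ∀ t, 0 ≤ q t)
    (hp1 : ∫ t, p t ∂m = 1) (hq1 : ∫ t, q t ∂m = 1)
    (hP0 : ∀ t x, 0 ≤ P t x) (hQ0 : ∀ t x, 0 ≤ Q t x)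
    (hPm : Measurable (Function.uncurry P)) (hQm : Measurable (Function.uncurry Q))
    (hP1 : ∀ t, ∫ x, P t x ∂ν = 1) (hQ1 : ∀ t, ∫ x, Q t x ∂ν = 1) :
    hell2 ν (fun x => ∫ t, P t x * p t ∂m) (fun x => ∫ t, Q t x * q t ∂m) ≤
      2 * hell2 m p q + 2 * ∫ t, hell2 ν (P t) (Q t) * q t ∂m := by
  have hp : Integrable p m := .of_integral_ne_zero (by simp [hp1])
  have hq : Integrable q m := .of_integral_ne_zero (by simp [hq1])
  have hPp := integrable_uncurry_mul_of_integral_eq_one hPm hP0 hP1 hp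
  have hPq := integrable_uncurry_mul_of_integral_eq_one hPm hP0 hP1 hq
  have hQq := integrable_uncurry_mul_of_integral_eq_one hQm hQ0 hQ1 hq
  have mixing_weights : hell2 ν (fun x => ∫ t, P t x * p t ∂m) (fun x => ∫ t, P t x * q t ∂m) ≤
      hell2 m p q := by
    refine (hell2_integral_le_integral_hell2 hPp hPq (fun t x => mul_nonneg (hP0 t x) (hp0 t))
      (fun t x => mul_nonneg (hP0 t x) (hq0 t))).trans_eq ?_
    have hell2_slice (t : T) : hell2 ν (fun x => P t x * p t) (fun x => P t x * q t) =
        (√(p t) - √(q t)) ^ 2 / 2 := by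
      rw [hell2_mul_const_mul_const (hP0 t), hP1, mul_one]
    simp only [hell2_slice]
    rw [integral_div, hell2]
    ring
  have mixing_densities : hell2 ν (fun x => ∫ t, P t x * q t ∂m) (fun x => ∫ t, Q t x * q t ∂m) ≤
      ∫ t, hell2 ν (P t) (Q t) * q t ∂m := by
    refine (hell2_integral_le_integral_hell2 hPq hQq (fun t x => mul_nonneg (hP0 t x) (hq0 t))
      (fun t x => mul_nonneg (hQ0 t x) (hq0 t))).trans_eq ?_
    simp only [hell2_mul_const (hq0 _)]
  calc _ ≤ 2 * hell2 ν (fun x => ∫ t, P t x * p t ∂m) (fun x => ∫ t, P t x * q t ∂m) +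
        2 * hell2 ν (fun x => ∫ t, P t x * q t ∂m) (fun x => ∫ t, Q t x * q t ∂m) :=
        hell2_le_two_mul_add hPp.integral_prod_right hPq.integral_prod_right
          hQq.integral_prod_right
    _ ≤ _ := by linarith

/-- Hellinger bound for mixtures: `h²(P,Q) ≤ 2h²(p,q) + 2∫ h²(P_t,Q_t) q(t) dm(t)`. -/
theorem hellinger_mixture {T E : Type*} [MeasurableSpace T] [MeasurableSpace E]
    (m : Measure T) (ν : Measure E) [SigmaFinite m] [SigmaFinite ν]
    (p q : T → ℝ) (P Q : T → E → ℝ)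
    (hp0 : ∀ t, 0 ≤ p t) (hq0 : ∀ t, 0 ≤ q t)
    (hpm : Measurable p) (hqm : Measurable q)
    (hp1 : ∫ t, p t ∂m = 1) (hq1 : ∫ t, q t ∂m = 1)
    (hP0 : ∀ t x, 0 ≤ P t x) (hQ0 : ∀ t x, 0 ≤ Q t x)
    (hPm : Measurable (Function.uncurry P)) (hQm : Measurable (Function.uncurry Q))
    (hP1 : ∀ t, ∫ x, P t x ∂ν = 1) (hQ1 : ∀ t, ∫ x, Q t x ∂ν = 1) :
    hell2 ν (fun x => ∫ t, P t x * p t ∂m) (fun x => ∫ t, Q t x * q t ∂m) ≤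
      2 * hell2 m p q + 2 * ∫ t, hell2 ν (P t) (Q t) * q t ∂m :=
  hellinger_mixture_general m ν p q P Q hp0 hq0 hp1 hq1 hP0 hQ0 hPm hQm hP1 hQ1
end

section
/- Let $J$ be a finite nonempty index set and let $(\phi_j)_{j\in J}$ and $(\psi_j)_{j\in J}$ be two orthonormal families in a complex Hilbert space $\mathbb{H}$. Set $A=(\langle\phi_i,\psi_j\rangle)_{i,j\in J}$. If $a=\sum_{j\in J}\|\phi_j-\psi_j\|^2 \le 2/5$, then $1-|\det A| \le \frac{5}{2}\sum_{j\in J}\|\phi_j-\psi_j\|^2$. -/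
/-!
Let `wᵢ = ∑ⱼ ⟪ψⱼ, φᵢ⟫ ψⱼ` be the orthogonal projection of `φᵢ` onto the span of the `ψⱼ`. Then
`A Aᴴ` is the Gram matrix of the `wᵢ` and, `φ` being orthonormal, `1 - A Aᴴ` is the Gram matrix of
the residuals `φᵢ - wᵢ`; hence `0 ≤ A Aᴴ ≤ 1` and the eigenvalues `νᵢ` of `A Aᴴ` lie in `[0, 1]`.
The Weierstrass product inequality gives
`|det A|² = ∏ νᵢ ≥ 1 - ∑ (1 - νᵢ) = 1 - ∑ ‖φᵢ - wᵢ‖² ≥ 1 - ∑ ‖φᵢ - ψᵢ‖²`,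
the last step because `wᵢ` is the point of the span closest to `φᵢ`.
Finally `1 - |det A| ≤ 1 - |det A|²` once `|det A| ≤ 1`.
-/

section

open scoped InnerProductSpace MatrixOrder ComplexOrder
open Finset Matrix Submodule

theorem Finset.one_sub_sum_le_prod_one_sub {ι R : Type*} [CommRing R] [LinearOrder R]
    [IsStrictOrderedRing R] (s : Finset ι) {f : ι → R} (h0 : ∀ i ∈ s, 0 ≤ f i)
    (h1 : ∀ i ∈ s, f i ≤ 1) :
    1 - ∑ i ∈ s, f i ≤ ∏ i ∈ s, (1 - f i) := by
  classical
  induction s using Finset.induction with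
  | empty => simp
  | insert b t hb ih =>
    rw [sum_insert hb, prod_insert hb]
    have ht := ih (fun i hi ↦ h0 i (mem_insert_of_mem hi)) fun i hi ↦ h1 i (mem_insert_of_mem hi)
    have hsum : 0 ≤ ∑ i ∈ t, f i := sum_nonneg fun i hi ↦ h0 i (mem_insert_of_mem hi)
    have hb0 := h0 b (mem_insert_self b t)
    have hb1 := h1 b (mem_insert_self b t)
    nlinarith [mul_le_mul_of_nonneg_left ht (sub_nonneg.2 hb1), mul_nonneg hb0 hsum]

theorem Matrix.one_sub_re_trace_one_sub_le_re_det {𝕜 n : Type*} [RCLike 𝕜] [Fintype n]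
    [DecidableEq n] {M : Matrix n n 𝕜} (h0 : 0 ≤ M) (h1 : M ≤ 1) :
    1 - RCLike.re (1 - M).trace ≤ RCLike.re M.det := by
  have hM : M.IsHermitian := h0.posSemidef.isHermitian
  have hle (i : n) : hM.eigenvalues i ≤ 1 :=
    (CFC.le_one_iff M hM.isSelfAdjoint).1 h1 _ (hM.eigenvalues_mem_spectrum_real i)
  have hge (i : n) : 0 ≤ hM.eigenvalues i := h0.posSemidef.eigenvalues_nonneg i
  have htrace : RCLike.re (1 - M).trace = ∑ i, (1 - hM.eigenvalues i) := by
    simp [trace_sub, hM.trace_eq_sum_eigenvalues]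
  have hdet : RCLike.re M.det = ∏ i, hM.eigenvalues i := by
    rw [hM.det_eq_prod_eigenvalues, ← RCLike.ofReal_prod, RCLike.ofReal_re]
  rw [htrace, hdet]
  simpa using Finset.one_sub_sum_le_prod_one_sub univ (f := fun i ↦ 1 - hM.eigenvalues i)
    (fun i _ ↦ sub_nonneg.2 (hle i)) fun i _ ↦ by linarith [hge i]

variable {𝕜 E : Type*} [RCLike 𝕜] [NormedAddCommGroup E] [InnerProductSpace 𝕜 E]

theorem Matrix.gram_add_of_inner_eq_zero {n : Type*} {u w : n → E}
    (h : ∀ i j, ⟪u i, w j⟫_𝕜 = 0) : gram 𝕜 (u + w) = gram 𝕜 u + gram 𝕜 w := by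
  ext i j
  have h' : ⟪w i, u j⟫_𝕜 = 0 := by rw [← inner_conj_symm, h, map_zero]
  simp [inner_add_left, inner_add_right, h, h']

namespace Orthonormal

variable {ι : Type*} [Fintype ι] {ψ : ι → E}

theorem inner_sub_sum_inner_smul_eq_zero (hψ : Orthonormal 𝕜 ψ) {y : E}
    (hy : y ∈ span 𝕜 (Set.range ψ)) (x : E) : ⟪y, x - ∑ j, ⟪ψ j, x⟫_𝕜 • ψ j⟫_𝕜 = 0 := by
  induction hy using Submodule.span_induction with
  | mem y hy =>
    obtain ⟨j, rfl⟩ := hy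
    rw [inner_sub_right, hψ.inner_right_fintype, sub_self]
  | zero => exact inner_zero_left _
  | add y z _ _ hy hz => rw [inner_add_left, hy, hz, add_zero]
  | smul c y _ hy => rw [inner_smul_left, hy, mul_zero]

theorem norm_sub_sum_inner_smul_le (hψ : Orthonormal 𝕜 ψ) {y : E}
    (hy : y ∈ span 𝕜 (Set.range ψ)) (x : E) : ‖x - ∑ j, ⟪ψ j, x⟫_𝕜 • ψ j‖ ≤ ‖x - y‖ := by
  set p := ∑ j, ⟪ψ j, x⟫_𝕜 • ψ j
  have hp : p ∈ span 𝕜 (Set.range ψ) := (mem_span_range_iff_exists_fun 𝕜).2 ⟨_, rfl⟩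
  have hperp : ⟪x - p, p - y⟫_𝕜 = 0 := by
    rw [← inner_conj_symm, hψ.inner_sub_sum_inner_smul_eq_zero (sub_mem hp hy), map_zero]
  have hpyth := norm_add_sq_eq_norm_sq_add_norm_sq_of_inner_eq_zero _ _ hperp
  rw [sub_add_sub_cancel] at hpyth
  exact (mul_self_le_mul_self_iff (norm_nonneg _) (norm_nonneg _)).2 <| by
    nlinarith [mul_self_nonneg ‖p - y‖]

variable {m : Type*}

theorem gram_sum_inner_smul (hψ : Orthonormal 𝕜 ψ) (φ : m → E) :
    gram 𝕜 (fun i ↦ ∑ j, ⟪ψ j, φ i⟫_𝕜 • ψ j) =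
      of (fun i j ↦ ⟪φ i, ψ j⟫_𝕜) * (of fun i j ↦ ⟪φ i, ψ j⟫_𝕜)ᴴ := by
  ext i k
  simp [hψ.inner_sum, mul_apply]

theorem one_sub_mul_conjTranspose_eq_gram [DecidableEq m] {φ : m → E} (hφ : Orthonormal 𝕜 φ)
    (hψ : Orthonormal 𝕜 ψ) :
    1 - of (fun i j ↦ ⟪φ i, ψ j⟫_𝕜) * (of fun i j ↦ ⟪φ i, ψ j⟫_𝕜)ᴴ =
      gram 𝕜 (fun i ↦ φ i - ∑ j, ⟪ψ j, φ i⟫_𝕜 • ψ j) := by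
  set p : m → E := fun i ↦ ∑ j, ⟪ψ j, φ i⟫_𝕜 • ψ j
  have hp (i : m) : p i ∈ span 𝕜 (Set.range ψ) := (mem_span_range_iff_exists_fun 𝕜).2 ⟨_, rfl⟩
  have hsplit : gram 𝕜 φ = gram 𝕜 (φ - p) + gram 𝕜 p := by
    rw [← gram_add_of_inner_eq_zero, sub_add_cancel]
    intro i k
    rw [← inner_conj_symm, Pi.sub_apply, hψ.inner_sub_sum_inner_smul_eq_zero (hp k), map_zero]
  rw [← hψ.gram_sum_inner_smul, ← gram_eq_one_iff_orthonormal.2 hφ, hsplit, add_sub_cancel_right]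
  rfl

theorem one_sub_norm_det_sq_le [DecidableEq ι] {φ : ι → E} (hφ : Orthonormal 𝕜 φ)
    (hψ : Orthonormal 𝕜 ψ) :
    1 - ‖(of fun i j ↦ ⟪φ i, ψ j⟫_𝕜).det‖ ^ 2 ≤ ∑ j, ‖φ j - ψ j‖ ^ 2 := by
  set A : Matrix ι ι 𝕜 := of fun i j ↦ ⟪φ i, ψ j⟫_𝕜
  have h0 : 0 ≤ A * Aᴴ := (posSemidef_self_mul_conjTranspose A).nonneg
  have h1 : A * Aᴴ ≤ 1 := by
    rw [le_iff, hφ.one_sub_mul_conjTranspose_eq_gram hψ]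
    exact posSemidef_gram 𝕜 _
  have hdet : RCLike.re (A * Aᴴ).det = ‖A.det‖ ^ 2 := by
    rw [det_mul, det_conjTranspose, RCLike.star_def, RCLike.mul_conj, ← RCLike.ofReal_pow,
      RCLike.ofReal_re]
  have htrace : RCLike.re (1 - A * Aᴴ).trace ≤ ∑ j, ‖φ j - ψ j‖ ^ 2 := by
    rw [hφ.one_sub_mul_conjTranspose_eq_gram hψ, trace, map_sum]
    simp only [diag_apply, gram_apply, inner_self_eq_norm_sq]
    gcongr with j
    exact hψ.norm_sub_sum_inner_smul_le (subset_span (Set.mem_range_self j)) (φ j)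
  linarith [one_sub_re_trace_one_sub_le_re_det h0 h1]

theorem one_sub_norm_det_le [DecidableEq ι] {φ : ι → E} (hφ : Orthonormal 𝕜 φ)
    (hψ : Orthonormal 𝕜 ψ) :
    1 - ‖(of fun i j ↦ ⟪φ i, ψ j⟫_𝕜).det‖ ≤ ∑ j, ‖φ j - ψ j‖ ^ 2 := by
  have hsq := hφ.one_sub_norm_det_sq_le hψ
  have hdet := norm_nonneg (of fun i j ↦ ⟪φ i, ψ j⟫_𝕜).det
  have hsum : 0 ≤ ∑ j, ‖φ j - ψ j‖ ^ 2 := by positivity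
  nlinarith

end Orthonormal

end

theorem one_sub_det_gram_le_general {H ι : Type*} [NormedAddCommGroup H] [InnerProductSpace ℂ H]
    [Fintype ι] [DecidableEq ι]
    (φ ψ : ι → H) (hφ : Orthonormal ℂ φ) (hψ : Orthonormal ℂ ψ) :
    1 - ‖Matrix.det (Matrix.of fun i j : ι => (inner ℂ (φ i) (ψ j) : ℂ))‖ ≤
      (5 / 2) * ∑ j, ‖φ j - ψ j‖ ^ 2 := by
  have hsum : 0 ≤ ∑ j, ‖φ j - ψ j‖ ^ 2 := by positivity
  linarith [hφ.one_sub_norm_det_le hψ]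

/-- If `(φ_j)` and `(ψ_j)` are orthonormal families indexed by a finite nonempty set `J`
in a complex Hilbert space, `A = (⟪φ_i, ψ_j⟫)` and `∑_j ‖φ_j - ψ_j‖² ≤ 2/5`, then
`1 - |det A| ≤ (5/2) ∑_j ‖φ_j - ψ_j‖²`. -/
theorem one_sub_det_gram_le {H ι : Type*} [NormedAddCommGroup H] [InnerProductSpace ℂ H]
    [Fintype ι] [Nonempty ι] [DecidableEq ι]
    (φ ψ : ι → H) (hφ : Orthonormal ℂ φ) (hψ : Orthonormal ℂ ψ)
    (ha : ∑ j, ‖φ j - ψ j‖ ^ 2 ≤ 2 / 5) :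
    1 - ‖Matrix.det (Matrix.of fun i j : ι => (inner ℂ (φ i) (ψ j) : ℂ))‖ ≤
      (5 / 2) * ∑ j, ‖φ j - ψ j‖ ^ 2 :=
  one_sub_det_gram_le_general φ ψ hφ hψ
end

section
/- Let $\phi_1,\ldots,\phi_k$ and $\psi_1,\ldots,\psi_k$ be two orthonormal families in a complex Hilbert space. Writing $A=(\langle\phi_i,\psi_j\rangle)_{i,j=1,\ldots,k}=D+B$ where $D$ is the diagonal matrix with $D_{ii}=\langle\phi_i,\psi_i\rangle$ and $B=A-D$, assume $a=\sum_{j=1}^k\|\phi_j-\psi_j\|^2 \le 2/5$. Then all $|D_{ii}|\ge 1-a/2>0$, and the matrix $M=D^{-1}B$ satisfies $\|M\|_{HS}^2 \le \frac{1-a/4}{(1-a/2)^2}\, a \le \frac{9}{16}$, where $\|\cdot\|_{HS}$ is the Hilbert-Schmidt (Frobenius) norm. -/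
/-!
On the diagonal, `re ⟪φᵢ, ψᵢ⟫ = 1 - ‖φᵢ - ψᵢ‖²/2` bounds `|Dᵢᵢ|` from below. Off the diagonal,
Bessel's inequality gives `∑ⱼ |Aᵢⱼ|² ≤ 1`, so row `i` of `M = D⁻¹B` has squared norm at most
`1/|Dᵢᵢ|² - 1 ≤ tᵢ (1 - tᵢ/4)/(1 - tᵢ/2)²` with `tᵢ = ‖φᵢ - ψᵢ‖²`. The factor
`(1 - t/4)/(1 - t/2)²` is increasing in `t`, so it may be replaced by its value at `a = ∑ tᵢ`.
-/

open Finset Matrix RCLike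

section Real

/-- Substituting `u = 1 - t/2`, the factor is `(1 + u)/(2u²)`, decreasing in `u`. -/
lemma one_sub_div_four_div_one_sub_div_two_sq_le {s t : ℝ} (hs : 0 ≤ s) (hst : s ≤ t)
    (ht : t < 2) : (1 - s / 4) / (1 - s / 2) ^ 2 ≤ (1 - t / 4) / (1 - t / 2) ^ 2 := by
  have hu : 0 < 1 - t / 2 := by linarith
  have hv : 0 < 1 - s / 2 := by linarith
  rw [div_le_div_iff₀ (by positivity) (by positivity)]
  nlinarith [mul_nonneg (sub_nonneg.2 hst) hs, mul_nonneg (sub_nonneg.2 hst) hu.le,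
    mul_nonneg (mul_nonneg (sub_nonneg.2 hst) hs) hu.le]

lemma div_sq_sub_one_le_of_one_sub_div_two_le {S r t : ℝ} (hS : S ≤ 1) (ht : t < 2)
    (hr : 1 - t / 2 ≤ r) : (S - r ^ 2) / r ^ 2 ≤ (1 - t / 4) / (1 - t / 2) ^ 2 * t := by
  have hp : 0 < 1 - t / 2 := by linarith
  have hr0 : 0 < r := hp.trans_le hr
  calc (S - r ^ 2) / r ^ 2 ≤ 1 / r ^ 2 - 1 := by
        rw [sub_div, div_self (by positivity)]; gcongr
    _ ≤ 1 / (1 - t / 2) ^ 2 - 1 := by gcongr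
    _ = (1 - t / 4) / (1 - t / 2) ^ 2 * t := by
        rw [div_sub_one (by positivity), div_mul_eq_mul_div]
        congr 1
        ring

lemma one_sub_div_four_div_one_sub_div_two_sq_mul_le_nine_div_sixteen {a : ℝ} (ha0 : 0 ≤ a)
    (ha : a ≤ 2 / 5) :
    (1 - a / 4) / (1 - a / 2) ^ 2 * a ≤ 9 / 16 :=
  calc (1 - a / 4) / (1 - a / 2) ^ 2 * a
      ≤ (1 - 2 / 5 / 4) / (1 - 2 / 5 / 2) ^ 2 * (2 / 5) := by
        refine mul_le_mul (one_sub_div_four_div_one_sub_div_two_sq_le ha0 ha (by norm_num)) ha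
          ha0 (by norm_num)
    _ = 9 / 16 := by norm_num

end Real

section InnerProduct

variable {𝕜 E : Type*} [RCLike 𝕜] [NormedAddCommGroup E] [InnerProductSpace 𝕜 E]

lemma re_inner_eq_one_sub_norm_sub_sq_div_two {x y : E} (hx : ‖x‖ = 1) (hy : ‖y‖ = 1) :
    re (inner 𝕜 x y) = 1 - ‖x - y‖ ^ 2 / 2 := by
  rw [@norm_sub_sq 𝕜, hx, hy]
  ring

lemma one_sub_norm_sub_sq_div_two_le_norm_inner {x y : E} (hx : ‖x‖ = 1) (hy : ‖y‖ = 1) :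
    1 - ‖x - y‖ ^ 2 / 2 ≤ ‖inner 𝕜 x y‖ :=
  (re_inner_eq_one_sub_norm_sub_sq_div_two hx hy).symm.trans_le (re_le_norm _)

lemma Orthonormal.sum_norm_inner_right_sq_le {ι : Type*} [Fintype ι] {v : ι → E}
    (hv : Orthonormal 𝕜 v) (x : E) : ∑ j, ‖inner 𝕜 x (v j)‖ ^ 2 ≤ ‖x‖ ^ 2 := by
  simpa only [norm_inner_symm] using hv.sum_inner_products_le x (s := univ)

end InnerProduct

namespace Matrix

variable {n : Type*} [Fintype n] [DecidableEq n]

lemma inv_diagonal_of_ne_zero {K : Type*} [Field K] {d : n → K} (hd : ∀ i, d i ≠ 0) :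
    (diagonal d)⁻¹ = diagonal fun i => (d i)⁻¹ := by
  apply inv_eq_right_inv
  rw [diagonal_mul_diagonal, ← diagonal_one]
  congr with i
  exact mul_inv_cancel₀ (hd i)

lemma sum_norm_sq_sub_diagonal_diag_apply {R : Type*} [SeminormedAddCommGroup R]
    (A : Matrix n n R) (i : n) :
    ∑ j, ‖(A - diagonal fun l => A l l) i j‖ ^ 2 = ∑ j, ‖A i j‖ ^ 2 - ‖A i i‖ ^ 2 := by
  have hentry : ∀ j, ‖(A - diagonal fun l => A l l) i j‖ ^ 2
      = ‖A i j‖ ^ 2 - if i = j then ‖A i i‖ ^ 2 else 0 := by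
    intro j
    by_cases h : i = j
    · subst h; simp
    · simp [h]
  simp only [hentry, sum_sub_distrib, sum_ite_eq, mem_univ, if_true]

lemma sum_norm_sq_inv_diagonal_diag_mul_apply {K : Type*} [NormedField K] (A : Matrix n n K)
    (hA : ∀ l, A l l ≠ 0) (i : n) :
    ∑ j, ‖((diagonal fun l => A l l)⁻¹ * (A - diagonal fun l => A l l)) i j‖ ^ 2
      = (∑ j, ‖A i j‖ ^ 2 - ‖A i i‖ ^ 2) / ‖A i i‖ ^ 2 := by
  simp only [inv_diagonal_of_ne_zero hA, diagonal_mul, norm_mul, norm_inv, mul_pow, inv_pow]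
  rw [← mul_sum, sum_norm_sq_sub_diagonal_diag_apply, inv_mul_eq_div]

end Matrix

theorem gram_offdiagonal_estimate_general {H : Type*} [NormedAddCommGroup H] [InnerProductSpace ℂ H]
    {k : ℕ} (φ ψ : Fin k → H) (hφ : Orthonormal ℂ φ) (hψ : Orthonormal ℂ ψ)
    (a : ℝ) (haeq : a = ∑ j, ‖φ j - ψ j‖ ^ 2) (ha : a ≤ 2 / 5)
    (A D B M : Matrix (Fin k) (Fin k) ℂ)
    (hA : A = Matrix.of fun i j => (inner ℂ (φ i) (ψ j) : ℂ))
    (hD : D = Matrix.diagonal fun i => (inner ℂ (φ i) (ψ i) : ℂ))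
    (hB : B = A - D) (hM : M = D⁻¹ * B) :
    (∀ i, 1 - a / 2 ≤ ‖(inner ℂ (φ i) (ψ i) : ℂ)‖) ∧ 0 < 1 - a / 2 ∧
      (∑ i, ∑ j, ‖M i j‖ ^ 2 ≤ (1 - a / 4) / (1 - a / 2) ^ 2 * a) ∧
      (1 - a / 4) / (1 - a / 2) ^ 2 * a ≤ 9 / 16 := by
  set t : Fin k → ℝ := fun i => ‖φ i - ψ i‖ ^ 2
  have ht0 : ∀ i, 0 ≤ t i := fun i => sq_nonneg _
  have hta : ∀ i, t i ≤ a := fun i => haeq ▸ single_le_sum (fun j _ => ht0 j) (mem_univ i)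
  have ha0 : 0 ≤ a := haeq ▸ sum_nonneg fun j _ => ht0 j
  have hdiag : ∀ i, 1 - t i / 2 ≤ ‖(inner ℂ (φ i) (ψ i) : ℂ)‖ := fun i =>
    one_sub_norm_sub_sq_div_two_le_norm_inner (hφ.1 i) (hψ.1 i)
  have hdiag_a : ∀ i, 1 - a / 2 ≤ ‖(inner ℂ (φ i) (ψ i) : ℂ)‖ := fun i =>
    le_trans (by linarith [hta i]) (hdiag i)
  have hpos : 0 < 1 - a / 2 := by linarith
  refine ⟨hdiag_a, hpos, ?_,
    one_sub_div_four_div_one_sub_div_two_sq_mul_le_nine_div_sixteen ha0 ha⟩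
  have hA0 : ∀ l, A l l ≠ 0 := fun l => by
    simpa [hA] using norm_pos_iff.1 (hpos.trans_le (hdiag_a l))
  have hrow : ∀ i, ∑ j, ‖M i j‖ ^ 2 ≤ (1 - a / 4) / (1 - a / 2) ^ 2 * t i := fun i => by
    have hDA : D = diagonal fun l => A l l := by simp [hD, hA]
    rw [hM, hB, hDA, sum_norm_sq_inv_diagonal_diag_mul_apply A hA0 i]
    refine (div_sq_sub_one_le_of_one_sub_div_two_le (t := t i) ?_ (by linarith [hta i]) ?_).trans
      (mul_le_mul_of_nonneg_right ?_ (ht0 i))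
    · simpa [hA, hφ.1 i] using hψ.sum_norm_inner_right_sq_le (φ i)
    · simpa [hA] using hdiag i
    · exact one_sub_div_four_div_one_sub_div_two_sq_le (ht0 i) (hta i) (by linarith)
  calc ∑ i, ∑ j, ‖M i j‖ ^ 2 ≤ ∑ i, (1 - a / 4) / (1 - a / 2) ^ 2 * t i :=
        sum_le_sum fun i _ => hrow i
    _ = (1 - a / 4) / (1 - a / 2) ^ 2 * a := by rw [← mul_sum, haeq]

/-- Key matrix estimate: with `A = (⟪φ_i,ψ_j⟫)`, `D = diag(⟪φ_i,ψ_i⟫)`, `B = A - D`,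
`M = D⁻¹ B` and `a = ∑ ‖φ_j - ψ_j‖² ≤ 2/5`, each `|D_{ii}| ≥ 1 - a/2 > 0` and
`‖M‖²_HS ≤ (1-a/4)/(1-a/2)² · a ≤ 9/16`. -/
theorem gram_offdiagonal_estimate {H : Type*} [NormedAddCommGroup H] [InnerProductSpace ℂ H]
    {k : ℕ} (hk : 0 < k) (φ ψ : Fin k → H) (hφ : Orthonormal ℂ φ) (hψ : Orthonormal ℂ ψ)
    (a : ℝ) (haeq : a = ∑ j, ‖φ j - ψ j‖ ^ 2) (ha : a ≤ 2 / 5)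
    (A D B M : Matrix (Fin k) (Fin k) ℂ)
    (hA : A = Matrix.of fun i j => (inner ℂ (φ i) (ψ j) : ℂ))
    (hD : D = Matrix.diagonal fun i => (inner ℂ (φ i) (ψ i) : ℂ))
    (hB : B = A - D) (hM : M = D⁻¹ * B) :
    (∀ i, 1 - a / 2 ≤ ‖(inner ℂ (φ i) (ψ i) : ℂ)‖) ∧ 0 < 1 - a / 2 ∧
      (∑ i, ∑ j, ‖M i j‖ ^ 2 ≤ (1 - a / 4) / (1 - a / 2) ^ 2 * a) ∧
      (1 - a / 4) / (1 - a / 2) ^ 2 * a ≤ 9 / 16 :=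
  gram_offdiagonal_estimate_general φ ψ hφ hψ a haeq ha A D B M hA hD hB hM
end

section
/- Let $M$ be a $k\times k$ complex matrix with Hilbert-Schmidt norm $\|M\| < 1$ and $\mathrm{Tr}(M)=0$. Then $I+M$ is invertible and $|\det(I+M)| \ge \exp\left(-\frac{\|M\|^2}{2}\left(1+\frac{2\|M\|}{3(1-\|M\|)}\right)\right)$. -/
/-!
Along the segment `t ↦ 1 + t • M`, Jacobi's formula gives `φ' = φ · tr ((1 + t • M)⁻¹ M)` for
`φ t = det (1 + t • M)`. Expanding the inverse as a Neumann series, `tr M = 0` kills the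
constant term and `|tr (X Y)| ≤ ‖X‖ ‖Y‖` bounds the rest by `t r² / (1 - t r)`, `r = ‖M‖`.
So `log |φ|` decreases at rate at most `r² t + r³ t² / (1 - r)`, whose integral over `[0, 1]`
is the exponent of the bound.
-/

open Set Polynomial
open scoped Matrix.Norms.Frobenius

theorem norm_mul_exp_sub_le_norm_of_hasDerivAt_mul {f g : ℝ → ℂ} {B b : ℝ → ℝ} {a c : ℝ}
    (hac : a ≤ c) (hf : ∀ t ∈ Icc a c, HasDerivAt f (f t * g t) t)
    (hf0 : ∀ t ∈ Icc a c, f t ≠ 0) (hB : ∀ t ∈ Icc a c, HasDerivAt B (b t) t)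
    (hg : ∀ t ∈ Icc a c, -b t ≤ (g t).re) :
    ‖f a‖ * Real.exp (B a - B c) ≤ ‖f c‖ := by
  set ψ : ℝ → ℝ := fun t ↦ Real.log (‖f t‖ ^ 2) + 2 * B t
  have hψ : ∀ t ∈ Icc a c, HasDerivAt ψ (2 * ((g t).re + b t)) t := fun t ht ↦ by
    have hpos : 0 < ‖f t‖ := norm_pos_iff.mpr (hf0 t ht)
    refine (((hf t ht).norm_sq.log (by positivity)).add ((hB t ht).const_mul 2)).congr_deriv ?_
    rw [Complex.inner, mul_right_comm, Complex.mul_conj, Complex.normSq_eq_norm_sq,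
      Complex.re_ofReal_mul]
    field_simp
  have hmono : MonotoneOn ψ (Icc a c) :=
    monotoneOn_of_hasDerivWithinAt_nonneg (convex_Icc a c)
      (fun t ht ↦ (hψ t ht).continuousAt.continuousWithinAt)
      (fun t ht ↦ (hψ t (interior_subset ht)).hasDerivWithinAt)
      (fun t ht ↦ by linarith [hg t (interior_subset ht)])
  have hac' : ψ a ≤ ψ c := hmono (left_mem_Icc.mpr hac) (right_mem_Icc.mpr hac) hac
  have hlog : Real.log ‖f a‖ + (B a - B c) ≤ Real.log ‖f c‖ := by
    simp only [ψ, Real.log_pow] at hac'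
    push_cast at hac'
    linarith
  calc ‖f a‖ * Real.exp (B a - B c)
      = Real.exp (Real.log ‖f a‖ + (B a - B c)) := by
        rw [Real.exp_add, Real.exp_log (norm_pos_iff.mpr (hf0 a (left_mem_Icc.mpr hac)))]
    _ ≤ ‖f c‖ := by
        rw [← Real.exp_log (norm_pos_iff.mpr (hf0 c (right_mem_Icc.mpr hac)))]
        exact Real.exp_le_exp.mpr hlog

namespace Matrix

variable {n 𝕜 : Type*} [Fintype n] [RCLike 𝕜]

theorem frobenius_norm_eq_sqrt (A : Matrix n n 𝕜) : ‖A‖ = √(∑ i, ∑ j, ‖A i j‖ ^ 2) := by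
  simp [frobenius_norm_def, Real.sqrt_eq_rpow]

theorem frobenius_norm_trace_mul_le (A B : Matrix n n 𝕜) : ‖(A * B).trace‖ ≤ ‖A‖ * ‖B‖ := by
  have hAB : (A * B).trace = ∑ p : n × n, A p.1 p.2 * B p.2 p.1 := by
    simp [trace, mul_apply, Fintype.sum_prod_type]
  have hA : ‖A‖ = √(∑ p : n × n, ‖A p.1 p.2‖ ^ 2) := by
    rw [frobenius_norm_eq_sqrt, Fintype.sum_prod_type]
  have hB : ‖B‖ = √(∑ p : n × n, ‖B p.2 p.1‖ ^ 2) := by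
    rw [frobenius_norm_eq_sqrt, Fintype.sum_prod_type, Finset.sum_comm]
  rw [hAB, hA, hB]
  calc ‖∑ p : n × n, A p.1 p.2 * B p.2 p.1‖ ≤ ∑ p : n × n, ‖A p.1 p.2‖ * ‖B p.2 p.1‖ :=
        norm_sum_le_of_le _ fun p _ ↦ (norm_mul _ _).le
    _ ≤ _ := Real.sum_mul_le_sqrt_mul_sqrt _ _ _

variable [DecidableEq n]

theorem frobenius_norm_trace_pow_le (M : Matrix n n 𝕜) (p : ℕ) :
    ‖(M ^ (p + 2)).trace‖ ≤ ‖M‖ ^ (p + 2) :=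
  calc ‖(M ^ (p + 2)).trace‖ ≤ ‖M ^ (p + 1)‖ * ‖M‖ := by
        rw [pow_succ]; exact frobenius_norm_trace_mul_le _ _
    _ ≤ ‖M‖ ^ (p + 1) * ‖M‖ := by gcongr; exact norm_pow_le' M p.succ_pos
    _ = ‖M‖ ^ (p + 2) := by ring

theorem frobenius_norm_trace_inv_one_add_smul_mul_le {M : Matrix n n 𝕜} (htr : M.trace = 0) {t : ℝ}
    (ht : 0 ≤ t) (htM : t * ‖M‖ < 1) :
    ‖((1 + (t : 𝕜) • M)⁻¹ * M).trace‖ ≤ t * ‖M‖ ^ 2 / (1 - t * ‖M‖) := by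
  have hsmall : ‖-((t : 𝕜) • M)‖ < 1 := by
    rwa [norm_neg, norm_smul, RCLike.norm_ofReal, abs_of_nonneg ht]
  have hinv : HasSum (fun p ↦ (-t : 𝕜) ^ p • M ^ p) (1 + (t : 𝕜) • M)⁻¹ := by
    have := hasSum_geom_series_inverse _ hsmall
    rwa [sub_neg_eq_add, ← nonsing_inv_eq_ringInverse, ← neg_smul, funext fun p ↦ smul_pow _ _ p]
      at this
  have htrace : HasSum (fun p ↦ (-t : 𝕜) ^ p * (M ^ (p + 1)).trace)
      ((1 + (t : 𝕜) • M)⁻¹ * M).trace := by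
    simpa [Function.comp_def, pow_succ, smul_mul_assoc] using
      (hinv.mul_right M).map (traceAddMonoidHom n 𝕜) (continuous_id.matrix_trace)
  have htail : HasSum (fun p ↦ (-t : 𝕜) ^ (p + 1) * (M ^ (p + 2)).trace)
      ((1 + (t : 𝕜) • M)⁻¹ * M).trace := by
    simpa [htr] using (hasSum_nat_add_iff' 1).mpr htrace
  have hgeom : HasSum (fun p : ℕ ↦ t * ‖M‖ ^ 2 * (t * ‖M‖) ^ p)
      (t * ‖M‖ ^ 2 * (1 - t * ‖M‖)⁻¹) :=
    (hasSum_geometric_of_lt_one (by positivity) htM).mul_left _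
  rw [div_eq_mul_inv]
  refine htail.norm_le_of_bounded hgeom fun p ↦ ?_
  calc ‖(-t : 𝕜) ^ (p + 1) * (M ^ (p + 2)).trace‖ ≤ t ^ (p + 1) * ‖M‖ ^ (p + 2) := by
        rw [norm_mul, norm_pow, norm_neg, RCLike.norm_ofReal, abs_of_nonneg ht]
        gcongr
        exact frobenius_norm_trace_pow_le M p
    _ = t * ‖M‖ ^ 2 * (t * ‖M‖) ^ p := by ring

theorem hasDerivAt_det_one_add_smul (N : Matrix n n 𝕜) :
    HasDerivAt (fun s : 𝕜 ↦ (1 + s • N).det) N.trace 0 := by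
  have h : ∀ s : 𝕜, (1 + s • N).det = (det (1 + (X : 𝕜[X]) • N.map C)).eval s := by
    intro s
    simp [eval_det, ← smul_eq_mul_diagonal]
  rw [funext h, ← derivative_det_one_add_X_smul]
  exact Polynomial.hasDerivAt _ 0

theorem hasDerivAt_det_add_smul {A : Matrix n n 𝕜} (hA : IsUnit A) (B : Matrix n n 𝕜) :
    HasDerivAt (fun s : 𝕜 ↦ (A + s • B).det) (A.det * (A⁻¹ * B).trace) 0 := by
  have h : ∀ s : 𝕜, (A + s • B).det = A.det * (1 + s • (A⁻¹ * B)).det := fun s ↦ by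
    rw [← det_mul, mul_add, mul_one, mul_smul_comm, mul_nonsing_inv_cancel_left _ _
      ((isUnit_iff_isUnit_det A).mp hA)]
  simpa only [h] using (hasDerivAt_det_one_add_smul (A⁻¹ * B)).const_mul A.det

theorem hasDerivAt_det_one_add_ofReal_smul (M : Matrix n n ℂ) {t : ℝ}
    (ht : IsUnit (1 + (t : ℂ) • M)) :
    HasDerivAt (fun s : ℝ ↦ (1 + (s : ℂ) • M).det)
      ((1 + (t : ℂ) • M).det * ((1 + (t : ℂ) • M)⁻¹ * M).trace) t := by
  have h := HasDerivAt.comp_sub_const t t <| by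
    rw [sub_self]; exact (hasDerivAt_det_add_smul ht M).comp_ofReal (z := 0)
  refine h.congr_of_eventuallyEq (Filter.Eventually.of_forall fun s ↦ ?_)
  push_cast
  rw [add_assoc, ← add_smul, add_sub_cancel]

theorem isUnit_one_add_ofReal_smul {M : Matrix n n ℂ} (hM : ‖M‖ < 1) {t : ℝ}
    (ht : t ∈ Icc (0 : ℝ) 1) : IsUnit (1 + (t : ℂ) • M) := by
  rw [← sub_neg_eq_add]
  refine isUnit_one_sub_of_norm_lt_one ?_
  rw [norm_neg, norm_smul, Complex.norm_real, Real.norm_of_nonneg ht.1]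
  nlinarith [ht.2, norm_nonneg M]

theorem neg_le_re_trace_inv_one_add_ofReal_smul_mul {M : Matrix n n ℂ} (hM : ‖M‖ < 1)
    (htr : M.trace = 0) {t : ℝ} (ht : t ∈ Icc (0 : ℝ) 1) :
    -(‖M‖ ^ 2 * t + ‖M‖ ^ 3 * t ^ 2 / (1 - ‖M‖)) ≤ ((1 + (t : ℂ) • M)⁻¹ * M).trace.re := by
  set r := ‖M‖
  have htr1 : t * r ≤ r := by nlinarith [ht.2, norm_nonneg M]
  have hnorm : ‖((1 + (t : ℂ) • M)⁻¹ * M).trace‖ ≤ t * r ^ 2 / (1 - t * r) :=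
    frobenius_norm_trace_inv_one_add_smul_mul_le htr ht.1 (by linarith)
  have hsplit : t * r ^ 2 / (1 - t * r) = r ^ 2 * t + r ^ 3 * t ^ 2 / (1 - t * r) := by
    have : 1 - t * r ≠ 0 := by linarith
    field_simp
    ring
  have hmono : r ^ 3 * t ^ 2 / (1 - t * r) ≤ r ^ 3 * t ^ 2 / (1 - r) := by
    have ht0 : 0 ≤ t := ht.1
    gcongr
  linarith [neg_abs_le ((1 + (t : ℂ) • M)⁻¹ * M).trace.re,
    Complex.abs_re_le_norm ((1 + (t : ℂ) • M)⁻¹ * M).trace]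

theorem exp_le_norm_det_one_add {M : Matrix n n ℂ} (hM : ‖M‖ < 1) (htr : M.trace = 0) :
    Real.exp (-(‖M‖ ^ 2 / 2 + ‖M‖ ^ 3 / (3 * (1 - ‖M‖)))) ≤ ‖(1 + M).det‖ := by
  set r := ‖M‖
  have hr1 : 1 - r ≠ 0 := by linarith
  have hB : ∀ t ∈ Icc (0 : ℝ) 1,
      HasDerivAt (fun t ↦ r ^ 2 * t ^ 2 / 2 + r ^ 3 * t ^ 3 / (3 * (1 - r)))
        (r ^ 2 * t + r ^ 3 * t ^ 2 / (1 - r)) t := fun t _ ↦ by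
    refine ((((hasDerivAt_pow 2 t).const_mul (r ^ 2)).div_const 2).add
      (((hasDerivAt_pow 3 t).const_mul (r ^ 3)).div_const (3 * (1 - r)))).congr_deriv ?_
    field_simp
    ring
  have key := norm_mul_exp_sub_le_norm_of_hasDerivAt_mul zero_le_one
    (fun t ht ↦ hasDerivAt_det_one_add_ofReal_smul M (isUnit_one_add_ofReal_smul hM ht))
    (fun t ht ↦ ((isUnit_iff_isUnit_det _).mp (isUnit_one_add_ofReal_smul hM ht)).ne_zero) hB
    (fun t ht ↦ neg_le_re_trace_inv_one_add_ofReal_smul_mul hM htr ht)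
  simp only [Complex.ofReal_zero, Complex.ofReal_one, zero_smul, one_smul, add_zero, det_one,
    norm_one, one_mul] at key
  refine le_of_eq_of_le ?_ key
  congr 1
  ring

end Matrix

open Matrix

/-- If `M` is a `k × k` complex matrix with Hilbert-Schmidt norm `r < 1` and `Tr M = 0`,
then `I + M` is invertible and `|det (I + M)| ≥ exp(-(r²/2)(1 + 2r/(3(1-r))))`. -/
theorem det_one_add_lower_bound {k : ℕ} (M : Matrix (Fin k) (Fin k) ℂ) (r : ℝ)
    (hr : r = Real.sqrt (∑ i, ∑ j, ‖M i j‖ ^ 2))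
    (hr1 : r < 1) (htr : M.trace = 0) :
    IsUnit (1 + M) ∧
      Real.exp (-(r ^ 2 / 2) * (1 + 2 * r / (3 * (1 - r)))) ≤
        ‖Matrix.det (1 + M)‖ := by
  have hM : ‖M‖ = r := by rw [hr, frobenius_norm_eq_sqrt]
  have hM1 : ‖M‖ < 1 := hM ▸ hr1
  refine ⟨by simpa using isUnit_one_add_ofReal_smul hM1 (right_mem_Icc.mpr zero_le_one), ?_⟩
  have hr1' : 1 - r ≠ 0 := by linarith
  calc Real.exp (-(r ^ 2 / 2) * (1 + 2 * r / (3 * (1 - r))))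
      = Real.exp (-(r ^ 2 / 2 + r ^ 3 / (3 * (1 - r)))) := by
        congr 1
        field_simp
    _ ≤ ‖(1 + M).det‖ := hM ▸ exp_le_norm_det_one_add hM1 htr
end
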